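/- Let u ∈ C³(ℝ) with u' > 0, and let f solve ∂_t f + u∂_x f = ν∂_{yy} f. Then Jf = ∂_y f + t u'∂_x f solves ∂_t (Jf) + u∂_x(Jf) = ν∂_{yy}(Jf) + ν(u'''/u')(Jf − ∂_y f) − 2ν∂_y((u''/u')(Jf − ∂_y f)). -/

import Mathlib

noncomputable def Dd (v : ℝ × ℝ × ℝ) (H : ℝ × ℝ × ℝ → ℝ) : ℝ × ℝ × ℝ → ℝ :=
  fun p => fderiv ℝ H p v

lemma Dd_contDiff {H : ℝ × ℝ × ℝ → ℝ} (hH : ContDiff ℝ (⊤ : ℕ∞) H) (v : ℝ × ℝ × ℝ) :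
    ContDiff ℝ (⊤ : ℕ∞) (Dd v H) :=
  (hH.fderiv_right (by simp)).clm_apply contDiff_const

lemma Dd_comm {H : ℝ × ℝ × ℝ → ℝ} (hH : ContDiff ℝ (⊤ : ℕ∞) H) (v w p : ℝ × ℝ × ℝ) :
    Dd w (Dd v H) p = Dd v (Dd w H) p := by
  have h1 : ContDiff ℝ (⊤ : ℕ∞) (fderiv ℝ H) := hH.fderiv_right (by simp)
  have hd : ∀ q, HasFDerivAt H (fderiv ℝ H q) q := fun q =>
    (hH.differentiable (by simp) q).hasFDerivAt
  have hx : HasFDerivAt (fderiv ℝ H) (fderiv ℝ (fderiv ℝ H) p) p :=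
    (h1.differentiable (by simp) p).hasFDerivAt
  have hsym := second_derivative_symmetric hd hx v w
  have hv : HasFDerivAt (fun q => fderiv ℝ H q v)
      ((ContinuousLinearMap.apply ℝ ℝ v).comp (fderiv ℝ (fderiv ℝ H) p)) p :=
    (ContinuousLinearMap.apply ℝ ℝ v).hasFDerivAt.comp p hx
  have hw : HasFDerivAt (fun q => fderiv ℝ H q w)
      ((ContinuousLinearMap.apply ℝ ℝ w).comp (fderiv ℝ (fderiv ℝ H) p)) p :=
    (ContinuousLinearMap.apply ℝ ℝ w).hasFDerivAt.comp p hx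
  show fderiv ℝ (fun q => fderiv ℝ H q v) p w = fderiv ℝ (fun q => fderiv ℝ H q w) p v
  rw [hv.fderiv, hw.fderiv]
  simpa using hsym.symm

lemma hdT {H : ℝ × ℝ × ℝ → ℝ} (hH : ContDiff ℝ (⊤ : ℕ∞) H) (t x y : ℝ) :
    HasDerivAt (fun s => H (s, x, y)) (Dd (1,0,0) H (t,x,y)) t :=
  (hH.differentiable (by simp) _).hasFDerivAt.comp_hasDerivAt t
    ((hasDerivAt_id t).prodMk ((hasDerivAt_const t x).prodMk (hasDerivAt_const t y)))

lemma hdX {H : ℝ × ℝ × ℝ → ℝ} (hH : ContDiff ℝ (⊤ : ℕ∞) H) (t x y : ℝ) :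
    HasDerivAt (fun a => H (t, a, y)) (Dd (0,1,0) H (t,x,y)) x :=
  (hH.differentiable (by simp) _).hasFDerivAt.comp_hasDerivAt x
    ((hasDerivAt_const x t).prodMk ((hasDerivAt_id x).prodMk (hasDerivAt_const x y)))

lemma hdY {H : ℝ × ℝ × ℝ → ℝ} (hH : ContDiff ℝ (⊤ : ℕ∞) H) (t x y : ℝ) :
    HasDerivAt (fun b => H (t, x, b)) (Dd (0,0,1) H (t,x,y)) y :=
  (hH.differentiable (by simp) _).hasFDerivAt.comp_hasDerivAt y
    ((hasDerivAt_const y t).prodMk ((hasDerivAt_const y x).prodMk (hasDerivAt_id y)))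



/-- Partial derivative in time. -/
noncomputable def pt (f : ℝ → ℝ → ℝ → ℝ) (t x y : ℝ) : ℝ := deriv (fun s => f s x y) t
/-- Partial derivative in `x`. -/
noncomputable def px (f : ℝ → ℝ → ℝ → ℝ) (t x y : ℝ) : ℝ := deriv (fun a => f t a y) x
/-- Partial derivative in `y`. -/
noncomputable def py (f : ℝ → ℝ → ℝ → ℝ) (t x y : ℝ) : ℝ := deriv (fun b => f t x b) y
/-- Second partial derivative in `y`. -/
noncomputable def pyy (f : ℝ → ℝ → ℝ → ℝ) (t x y : ℝ) : ℝ := deriv (fun b => py f t x b) y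

/-- If `f` solves `∂_t f + u∂_x f = ν∂_yy f` then `Jf = ∂_y f + tu'∂_x f` solves
`∂_t(Jf) + u∂_x(Jf) = ν∂_yy(Jf) + ν(u'''/u')(Jf − ∂_y f) − 2ν∂_y((u''/u')(Jf − ∂_y f))`. -/
theorem equation_for_Jf (ν : ℝ) (hν : 0 ≤ ν) (u : ℝ → ℝ) (hu : ContDiff ℝ 3 u)
    (hu'pos : ∀ y : ℝ, 0 < deriv u y)
    (f : ℝ → ℝ → ℝ → ℝ)
    (hf : ContDiff ℝ (⊤ : ℕ∞) (fun p : ℝ × ℝ × ℝ => f p.1 p.2.1 p.2.2))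
    (hpde : ∀ t x y : ℝ, pt f t x y + u y * px f t x y = ν * pyy f t x y) :
    let J : ℝ → ℝ → ℝ → ℝ := fun s a b => py f s a b + s * deriv u b * px f s a b
    ∀ t x y : ℝ,
      pt J t x y + u y * px J t x y
        = ν * pyy J t x y
          + ν * (deriv (deriv (deriv u)) y / deriv u y) * (J t x y - py f t x y)
          - 2 * ν * deriv (fun z =>
              (deriv (deriv u) z / deriv u z) * (J t x z - py f t x z)) y := by
  intro J t x y
  set G : ℝ × ℝ × ℝ → ℝ := fun p => f p.1 p.2.1 p.2.2 with hGdef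
  -- regularity of u and its derivatives
  have hu3 : ContDiff ℝ ((2 : ℕ) + 1) u := by exact_mod_cast hu
  have hu'c : ContDiff ℝ 2 (deriv u) := by exact_mod_cast (contDiff_succ_iff_deriv.mp hu3).2.2
  have hu'c2 : ContDiff ℝ ((1 : ℕ) + 1) (deriv u) := by exact_mod_cast hu'c
  have hu''c : ContDiff ℝ 1 (deriv (deriv u)) := by exact_mod_cast (contDiff_succ_iff_deriv.mp hu'c2).2.2
  have hud : ∀ b : ℝ, HasDerivAt u (deriv u b) b := fun b =>
    ((hu.differentiable (by norm_num)) b).hasDerivAt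
  have hu'd : ∀ b : ℝ, HasDerivAt (deriv u) (deriv (deriv u) b) b := fun b =>
    ((hu'c.differentiable (by norm_num)) b).hasDerivAt
  have hu''d : ∀ b : ℝ, HasDerivAt (deriv (deriv u)) (deriv (deriv (deriv u)) b) b := fun b =>
    ((hu''c.differentiable (by norm_num)) b).hasDerivAt
  -- smoothness of directional derivatives
  have hGx : ContDiff ℝ (⊤ : ℕ∞) (Dd (0,1,0) G) := Dd_contDiff hf _
  have hGy : ContDiff ℝ (⊤ : ℕ∞) (Dd (0,0,1) G) := Dd_contDiff hf _
  have hGt : ContDiff ℝ (⊤ : ℕ∞) (Dd (1,0,0) G) := Dd_contDiff hf _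
  have hGyy : ContDiff ℝ (⊤ : ℕ∞) (Dd (0,0,1) (Dd (0,0,1) G)) := Dd_contDiff hGy _
  have hGxy : ContDiff ℝ (⊤ : ℕ∞) (Dd (0,0,1) (Dd (0,1,0) G)) := Dd_contDiff hGx _
  have hGyyy : ContDiff ℝ (⊤ : ℕ∞) (Dd (0,0,1) (Dd (0,0,1) (Dd (0,0,1) G))) := Dd_contDiff hGyy _
  -- first partials in terms of Dd
  have hpt : ∀ s a b : ℝ, pt f s a b = Dd (1,0,0) G (s,a,b) := fun s a b => (hdT hf s a b).deriv
  have hpx : ∀ s a b : ℝ, px f s a b = Dd (0,1,0) G (s,a,b) := fun s a b => (hdX hf s a b).deriv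
  have hpy : ∀ s a b : ℝ, py f s a b = Dd (0,0,1) G (s,a,b) := fun s a b => (hdY hf s a b).deriv
  have hpyy : ∀ s a b : ℝ, pyy f s a b = Dd (0,0,1) (Dd (0,0,1) G) (s,a,b) := by
    intro s a b
    show deriv (fun c => py f s a c) b = _
    have hfun : (fun c => py f s a c) = fun c => Dd (0,0,1) G (s,a,c) :=
      funext fun c => hpy s a c
    rw [hfun]
    exact (hdY hGy s a b).deriv
  -- PDE in Dd form
  have hP : ∀ s a b : ℝ, Dd (1,0,0) G (s,a,b) + u b * Dd (0,1,0) G (s,a,b)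
      = ν * Dd (0,0,1) (Dd (0,0,1) G) (s,a,b) := fun s a b => by
    have := hpde s a b
    rwa [hpt, hpx, hpyy] at this
  -- J in Dd form
  have hJ : ∀ s a b : ℝ, J s a b
      = Dd (0,0,1) G (s,a,b) + s * deriv u b * Dd (0,1,0) G (s,a,b) := fun s a b => by
    show py f s a b + s * deriv u b * px f s a b = _
    rw [hpy, hpx]
  -- pt J
  have hptJ : pt J t x y = Dd (1,0,0) (Dd (0,0,1) G) (t,x,y)
      + (1 * deriv u y * Dd (0,1,0) G (t,x,y)
        + t * deriv u y * Dd (1,0,0) (Dd (0,1,0) G) (t,x,y)) := by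
    show deriv (fun s => J s x y) t = _
    have hfun : (fun s => J s x y)
        = fun s => Dd (0,0,1) G (s,x,y) + s * deriv u y * Dd (0,1,0) G (s,x,y) :=
      funext fun s => hJ s x y
    rw [hfun]
    exact ((hdT hGy t x y).add
      (((hasDerivAt_id t).mul_const (deriv u y)).mul (hdT hGx t x y))).deriv
  -- px J
  have hpxJ : px J t x y = Dd (0,1,0) (Dd (0,0,1) G) (t,x,y)
      + t * deriv u y * Dd (0,1,0) (Dd (0,1,0) G) (t,x,y) := by
    show deriv (fun a => J t a y) x = _
    have hfun : (fun a => J t a y)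
        = fun a => Dd (0,0,1) G (t,a,y) + t * deriv u y * Dd (0,1,0) G (t,a,y) :=
      funext fun a => hJ t a y
    rw [hfun]
    exact ((hdX hGy t x y).add ((hdX hGx t x y).const_mul (t * deriv u y))).deriv
  -- py J at arbitrary third coordinate
  have hpyJ : ∀ b : ℝ, py J t x b = Dd (0,0,1) (Dd (0,0,1) G) (t,x,b)
      + (t * deriv (deriv u) b * Dd (0,1,0) G (t,x,b)
        + t * deriv u b * Dd (0,0,1) (Dd (0,1,0) G) (t,x,b)) := by
    intro b
    show deriv (fun c => J t x c) b = _
    have hfun : (fun c => J t x c)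
        = fun c => Dd (0,0,1) G (t,x,c) + t * deriv u c * Dd (0,1,0) G (t,x,c) :=
      funext fun c => hJ t x c
    rw [hfun]
    exact ((hdY hGy t x b).add
      (((hu'd b).const_mul t).mul (hdY hGx t x b))).deriv
  -- pyy J
  have hpyyJ : pyy J t x y = Dd (0,0,1) (Dd (0,0,1) (Dd (0,0,1) G)) (t,x,y)
      + ((t * deriv (deriv (deriv u)) y * Dd (0,1,0) G (t,x,y)
          + t * deriv (deriv u) y * Dd (0,0,1) (Dd (0,1,0) G) (t,x,y))
        + (t * deriv (deriv u) y * Dd (0,0,1) (Dd (0,1,0) G) (t,x,y)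
          + t * deriv u y * Dd (0,0,1) (Dd (0,0,1) (Dd (0,1,0) G)) (t,x,y))) := by
    show deriv (fun b => py J t x b) y = _
    have hfun : (fun b => py J t x b)
        = fun b => Dd (0,0,1) (Dd (0,0,1) G) (t,x,b)
          + (t * deriv (deriv u) b * Dd (0,1,0) G (t,x,b)
            + t * deriv u b * Dd (0,0,1) (Dd (0,1,0) G) (t,x,b)) :=
      funext fun b => hpyJ b
    rw [hfun]
    exact ((hdY hGyy t x y).add
      (((((hu''d y).const_mul t).mul (hdY hGx t x y))).add
        ((((hu'd y).const_mul t).mul (hdY hGxy t x y))))).deriv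
  -- the difference J - py f
  have hJy : J t x y - py f t x y = t * deriv u y * Dd (0,1,0) G (t,x,y) := by
    show py f t x y + t * deriv u y * px f t x y - py f t x y = _
    rw [hpx]; ring
  -- the two "Jf - py f" correction terms
  have hdiv : ν * (deriv (deriv (deriv u)) y / deriv u y)
      * (t * deriv u y * Dd (0,1,0) G (t,x,y))
      = ν * t * deriv (deriv (deriv u)) y * Dd (0,1,0) G (t,x,y) := by
    have hne : deriv u y ≠ 0 := (hu'pos y).ne'
    field_simp
  have hterm2 : (fun z => (deriv (deriv u) z / deriv u z) * (J t x z - py f t x z))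
      = fun z => t * deriv (deriv u) z * Dd (0,1,0) G (t,x,z) := by
    funext z
    have hz : J t x z - py f t x z = t * deriv u z * Dd (0,1,0) G (t,x,z) := by
      show py f t x z + t * deriv u z * px f t x z - py f t x z = _
      rw [hpx]; ring
    rw [hz]
    have hne : deriv u z ≠ 0 := (hu'pos z).ne'
    field_simp
  have hderiv2 : deriv (fun z => t * deriv (deriv u) z * Dd (0,1,0) G (t,x,z)) y
      = t * deriv (deriv (deriv u)) y * Dd (0,1,0) G (t,x,y)
        + t * deriv (deriv u) y * Dd (0,0,1) (Dd (0,1,0) G) (t,x,y) :=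
    ((((hu''d y).const_mul t).mul (hdY hGx t x y))).deriv
  -- differentiated PDE in y
  have hPy : Dd (0,0,1) (Dd (1,0,0) G) (t,x,y)
      + (deriv u y * Dd (0,1,0) G (t,x,y) + u y * Dd (0,0,1) (Dd (0,1,0) G) (t,x,y))
      = ν * Dd (0,0,1) (Dd (0,0,1) (Dd (0,0,1) G)) (t,x,y) := by
    have hfun : (fun c => Dd (1,0,0) G (t,x,c) + u c * Dd (0,1,0) G (t,x,c))
        = fun c => ν * Dd (0,0,1) (Dd (0,0,1) G) (t,x,c) := funext fun c => hP t x c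
    have hL : HasDerivAt (fun c => Dd (1,0,0) G (t,x,c) + u c * Dd (0,1,0) G (t,x,c))
        (Dd (0,0,1) (Dd (1,0,0) G) (t,x,y)
          + (deriv u y * Dd (0,1,0) G (t,x,y) + u y * Dd (0,0,1) (Dd (0,1,0) G) (t,x,y))) y :=
      (hdY hGt t x y).add ((hud y).mul (hdY hGx t x y))
    have hR : HasDerivAt (fun c => ν * Dd (0,0,1) (Dd (0,0,1) G) (t,x,c))
        (ν * Dd (0,0,1) (Dd (0,0,1) (Dd (0,0,1) G)) (t,x,y)) y :=
      (hdY hGyy t x y).const_mul ν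
    exact (hfun ▸ hL).unique hR
  -- differentiated PDE in x
  have hPx : Dd (0,1,0) (Dd (1,0,0) G) (t,x,y) + u y * Dd (0,1,0) (Dd (0,1,0) G) (t,x,y)
      = ν * Dd (0,1,0) (Dd (0,0,1) (Dd (0,0,1) G)) (t,x,y) := by
    have hfun : (fun a => Dd (1,0,0) G (t,a,y) + u y * Dd (0,1,0) G (t,a,y))
        = fun a => ν * Dd (0,0,1) (Dd (0,0,1) G) (t,a,y) := funext fun a => hP t a y
    have hL : HasDerivAt (fun a => Dd (1,0,0) G (t,a,y) + u y * Dd (0,1,0) G (t,a,y))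
        (Dd (0,1,0) (Dd (1,0,0) G) (t,x,y)
          + u y * Dd (0,1,0) (Dd (0,1,0) G) (t,x,y)) x :=
      (hdX hGt t x y).add ((hdX hGx t x y).const_mul (u y))
    have hR : HasDerivAt (fun a => ν * Dd (0,0,1) (Dd (0,0,1) G) (t,a,y))
        (ν * Dd (0,1,0) (Dd (0,0,1) (Dd (0,0,1) G)) (t,x,y)) x :=
      (hdX hGyy t x y).const_mul ν
    exact (hfun ▸ hL).unique hR
  -- commutation of mixed partials
  have c1 : Dd (1,0,0) (Dd (0,0,1) G) (t,x,y) = Dd (0,0,1) (Dd (1,0,0) G) (t,x,y) :=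
    Dd_comm hf _ _ _
  have c1' : Dd (1,0,0) (Dd (0,1,0) G) (t,x,y) = Dd (0,1,0) (Dd (1,0,0) G) (t,x,y) :=
    Dd_comm hf _ _ _
  have c2 : Dd (0,1,0) (Dd (0,0,1) G) (t,x,y) = Dd (0,0,1) (Dd (0,1,0) G) (t,x,y) :=
    Dd_comm hf _ _ _
  have c3 : Dd (0,1,0) (Dd (0,0,1) (Dd (0,0,1) G)) (t,x,y)
      = Dd (0,0,1) (Dd (0,0,1) (Dd (0,1,0) G)) (t,x,y) := by
    have e1 : Dd (0,1,0) (Dd (0,0,1) (Dd (0,0,1) G)) (t,x,y)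
        = Dd (0,0,1) (Dd (0,1,0) (Dd (0,0,1) G)) (t,x,y) := Dd_comm hGy _ _ _
    have e2 : Dd (0,1,0) (Dd (0,0,1) G) = Dd (0,0,1) (Dd (0,1,0) G) :=
      funext fun q => Dd_comm hf _ _ q
    rw [e1, e2]
  rw [hptJ, hpxJ, hpyyJ, hJy, hterm2, hderiv2, hdiv, c1, c1', c2]
  rw [c3] at hPx
  linear_combination hPy + t * deriv u y * hPx
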